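/- (Submultiplicativity of ergodicity coefficients) Let f : ℝ≥0 → ℝ be convex with f(1) = 0 and let P, Q be transition matrices on 𝒳. Then η^f(PQ) ≤ η^f(P) · η^f(Q), where (PQ)(x,y) := ∑_z P(x,z)Q(z,y). -/

import Mathlib

open Finset

/-- A transition matrix on a finite state space `X`: nonnegative entries, rows sum to one. -/
def IsTransMat {X : Type*} [Fintype X] (M : X → X → ℝ) : Prop :=
  (∀ x y, 0 ≤ M x y) ∧ ∀ x, ∑ y, M x y = 1

/-- `f'(∞) := lim_{x→0⁺} x f(1/x)` in the extended reals. -/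
noncomputable def fDerivInfty (f : ℝ → ℝ) : EReal :=
  Filter.limUnder (nhdsWithin (0 : ℝ) (Set.Ioi 0)) fun x => ((x * f (1 / x) : ℝ) : EReal)

/-- The extended-real-valued π-weighted f-divergence between transition matrices, with the
conventions `0·f(0/0) := 0` and `0·f(a/0) := a·f'(∞)` for `a > 0`. -/
noncomputable def DfE {X : Type*} [Fintype X] (π : X → ℝ) (f : ℝ → ℝ)
    (M L : X → X → ℝ) : EReal :=
  ∑ x, ∑ y,
    if L x y = 0 then
      (if M x y = 0 then 0 else ((π x * M x y : ℝ) : EReal) * fDerivInfty f)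
    else ((π x * L x y * f (M x y / L x y) : ℝ) : EReal)

/-- Matrix product of transition matrices. -/
def matMul {X : Type*} [Fintype X] (M P : X → X → ℝ) : X → X → ℝ :=
  fun x y => ∑ z, M x z * P z y

/-- The f-divergence ergodicity coefficient on the space of transition matrices. -/
noncomputable def etaF {X : Type*} [Fintype X] (π : X → ℝ) (f : ℝ → ℝ)
    (P : X → X → ℝ) : EReal :=
  sSup {r : EReal | ∃ M L : X → X → ℝ, IsTransMat M ∧ IsTransMat L ∧ M ≠ L ∧
    0 < DfE π f M L ∧ DfE π f M L ≠ ⊤ ∧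
    r = DfE π f (matMul M P) (matMul L P) * ((((DfE π f M L).toReal)⁻¹ : ℝ) : EReal)}

/-!
Write `DfE π f M L = ∑ x, ∑ y, φ (π x * M x y) (π x * L x y)`, where `φ = perspective f` is
`φ m l = l * f (m / l)` closed at `l = 0` by the recession slope `f'(∞)`. On `[0, ∞)²`, `φ` is
positively homogeneous and subadditive: for `l > 0` by convexity of `f`, and at `l = 0` because
every secant slope of `f` is at most `f'(∞)`. Hence multiplying both arguments by a stochastic
matrix does not increase the divergence, which is in particular nonnegative. For
`0 < D(M‖L) < ∞` the ratio `D(MPQ‖LPQ) / D(M‖L)` is the product of `D(MP‖LP) / D(M‖L)` and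
`D(MPQ‖LPQ) / D(MP‖LP)` when `D(MP‖LP) > 0`, and is `0` otherwise.
-/

open Filter Topology

namespace ConvexOn

variable {f : ℝ → ℝ}

lemma exists_tendsto_inv_mul_atTop (hf : ConvexOn ℝ (Set.Ici 0) f) :
    ∃ c : EReal, Tendsto (fun s => ((s⁻¹ * f s : ℝ) : EReal)) atTop (𝓝 c) := by
  set g : ℝ → ℝ := fun s => (f (max s 1) - f 0) / (max s 1 - 0)
  have hpos : ∀ s : ℝ, 0 < max s 1 := fun s => zero_lt_one.trans_le (le_max_right s 1)
  have hg : Monotone g := fun s t hst =>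
    hf.secant_mono Set.self_mem_Ici (hpos s).le (hpos t).le (hpos s).ne' (hpos t).ne'
      (max_le_max hst le_rfl)
  have hg' : Tendsto (fun s => ((g s : ℝ) : EReal)) atTop (𝓝 (⨆ s, ((g s : ℝ) : EReal))) :=
    tendsto_atTop_iSup (EReal.coe_strictMono.monotone.comp hg)
  have h0 : Tendsto (fun s : ℝ => ((f 0 * s⁻¹ : ℝ) : EReal)) atTop (𝓝 ((0 : ℝ) : EReal)) :=
    EReal.tendsto_coe.mpr (by simpa using tendsto_inv_atTop_zero.const_mul (f 0))
  refine ⟨_, ((EReal.continuousAt_add (.inr (by simp)) (.inr (by simp))).tendsto.comp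
    (hg'.prodMk_nhds h0)).congr' ?_⟩
  filter_upwards [eventually_ge_atTop 1] with s hs
  have hs0 : s ≠ 0 := by positivity
  simp only [Function.comp, g, max_eq_left hs, ← EReal.coe_add, EReal.coe_eq_coe_iff]
  field_simp
  ring

lemma tendsto_inv_mul_fDerivInfty (hf : ConvexOn ℝ (Set.Ici 0) f) :
    Tendsto (fun s => ((s⁻¹ * f s : ℝ) : EReal)) atTop (𝓝 (fDerivInfty f)) := by
  obtain ⟨c, hc⟩ := hf.exists_tendsto_inv_mul_atTop
  have h0 : Tendsto (fun x => ((x * f (1 / x) : ℝ) : EReal)) (𝓝[>] 0) (𝓝 c) :=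
    (hc.comp tendsto_inv_nhdsGT_zero).congr fun x => by simp
  rwa [fDerivInfty, h0.limUnder_eq]

lemma slope_le_fDerivInfty (hf : ConvexOn ℝ (Set.Ici 0) f) {a b : ℝ} (ha : 0 ≤ a)
    (hab : a < b) : (((f b - f a) / (b - a) : ℝ) : EReal) ≤ fDerivInfty f := by
  set σ := (f b - f a) / (b - a)
  have hline : Tendsto (fun s : ℝ => s⁻¹ * (f a + σ * (s - a))) atTop (𝓝 σ) := by
    have h := (tendsto_inv_atTop_zero.const_mul (f a - σ * a)).const_add σ
    rw [mul_zero, add_zero] at h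
    refine h.congr' ?_
    filter_upwards [eventually_gt_atTop 0] with s hs
    field_simp
    ring
  refine le_of_tendsto_of_tendsto (EReal.tendsto_coe.mpr hline) hf.tendsto_inv_mul_fDerivInfty ?_
  filter_upwards [eventually_ge_atTop b] with s hs
  have hsa : 0 < s - a := by linarith
  have hσ : σ ≤ (f s - f a) / (s - a) :=
    hf.secant_mono ha (ha.trans hab.le) (ha.trans (hab.le.trans hs)) hab.ne' (by linarith) hs
  rw [le_div_iff₀ hsa] at hσ
  rw [EReal.coe_le_coe_iff]
  exact mul_le_mul_of_nonneg_left (by linarith) (inv_nonneg.mpr (by linarith))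

lemma mul_div_add_le (hf : ConvexOn ℝ (Set.Ici 0) f) {m₁ m₂ l₁ l₂ : ℝ}
    (hm₁ : 0 ≤ m₁) (hm₂ : 0 ≤ m₂) (hl₁ : 0 < l₁) (hl₂ : 0 < l₂) :
    (l₁ + l₂) * f ((m₁ + m₂) / (l₁ + l₂)) ≤ l₁ * f (m₁ / l₁) + l₂ * f (m₂ / l₂) := by
  have hl : 0 < l₁ + l₂ := add_pos hl₁ hl₂
  have h := hf.2 (Set.mem_Ici.2 (by positivity : 0 ≤ m₁ / l₁))
    (Set.mem_Ici.2 (by positivity : 0 ≤ m₂ / l₂))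
    (by positivity : 0 ≤ l₁ / (l₁ + l₂)) (by positivity : 0 ≤ l₂ / (l₁ + l₂)) (by field_simp)
  have hmid : l₁ / (l₁ + l₂) * (m₁ / l₁) + l₂ / (l₁ + l₂) * (m₂ / l₂) = (m₁ + m₂) / (l₁ + l₂) := by
    field_simp
  simp only [smul_eq_mul] at h
  rw [hmid] at h
  calc (l₁ + l₂) * f ((m₁ + m₂) / (l₁ + l₂))
      ≤ (l₁ + l₂) * (l₁ / (l₁ + l₂) * f (m₁ / l₁) + l₂ / (l₁ + l₂) * f (m₂ / l₂)) := by gcongr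
    _ = l₁ * f (m₁ / l₁) + l₂ * f (m₂ / l₂) := by field_simp

end ConvexOn

lemma EReal.sum_coe_mul {ι : Type*} (s : Finset ι) {w : ι → ℝ} (hw : ∀ i ∈ s, 0 ≤ w i)
    (e : EReal) : ∑ i ∈ s, (w i : EReal) * e = ((∑ i ∈ s, w i : ℝ) : EReal) * e := by
  induction s using Finset.cons_induction with
  | empty => simp
  | cons i s hi ih =>
    rw [sum_cons, sum_cons, EReal.coe_add, EReal.right_distrib_of_nonneg
      (EReal.coe_nonneg.mpr (hw i (mem_cons_self i s)))
      (EReal.coe_nonneg.mpr (sum_nonneg fun j hj => hw j (mem_cons_of_mem hj))),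
      ih fun j hj => hw j (mem_cons_of_mem hj)]

noncomputable def perspective (f : ℝ → ℝ) (m l : ℝ) : EReal :=
  if l = 0 then (m : EReal) * fDerivInfty f else ((l * f (m / l) : ℝ) : EReal)

section Perspective

variable {f : ℝ → ℝ}

@[simp]
lemma perspective_zero_zero : perspective f 0 0 = 0 := by
  simp [perspective]

lemma perspective_self (hf1 : f 1 = 0) (m : ℝ) : perspective f m m = 0 := by
  by_cases hm : m = 0
  · simp [hm]
  · simp [perspective, hm, hf1]

lemma perspective_mul {t : ℝ} (ht : 0 ≤ t) (m l : ℝ) :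
    perspective f (t * m) (t * l) = t * perspective f m l := by
  rcases ht.eq_or_lt with rfl | ht
  · simp
  by_cases hl : l = 0
  · simp [perspective, hl, EReal.coe_mul, mul_assoc]
  · simp only [perspective, hl, mul_eq_zero, ht.ne', false_or, if_false, ← EReal.coe_mul,
      mul_div_mul_left m l ht.ne', mul_assoc]

lemma ConvexOn.perspective_add_le_mul_fDerivInfty_add (hf : ConvexOn ℝ (Set.Ici 0) f) {m₁ m₂ l : ℝ}
    (hm₁ : 0 ≤ m₁) (hm₂ : 0 ≤ m₂) (hl : 0 < l) :
    perspective f (m₁ + m₂) l ≤ m₁ * fDerivInfty f + perspective f m₂ l := by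
  rcases hm₁.eq_or_lt with rfl | hm₁
  · simp
  have hslope := hf.slope_le_fDerivInfty (a := m₂ / l) (b := (m₁ + m₂) / l) (by positivity)
    (by gcongr; linarith)
  have hdiff : (m₁ + m₂) / l - m₂ / l = m₁ / l := by ring
  have hsplit : l * f ((m₁ + m₂) / l)
      = m₁ * ((f ((m₁ + m₂) / l) - f (m₂ / l)) / ((m₁ + m₂) / l - m₂ / l)) + l * f (m₂ / l) := by
    rw [hdiff]
    field_simp
    ring
  simp only [perspective, hl.ne', if_false, hsplit, EReal.coe_add, EReal.coe_mul]
  gcongr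

lemma ConvexOn.perspective_add_le (hf : ConvexOn ℝ (Set.Ici 0) f) {m₁ m₂ l₁ l₂ : ℝ}
    (hm₁ : 0 ≤ m₁) (hm₂ : 0 ≤ m₂) (hl₁ : 0 ≤ l₁) (hl₂ : 0 ≤ l₂) :
    perspective f (m₁ + m₂) (l₁ + l₂) ≤ perspective f m₁ l₁ + perspective f m₂ l₂ := by
  rcases hl₁.eq_or_lt with rfl | hl₁ <;> rcases hl₂.eq_or_lt with rfl | hl₂
  · simp only [perspective, add_zero, if_true, EReal.coe_add]
    rw [EReal.right_distrib_of_nonneg (EReal.coe_nonneg.2 hm₁) (EReal.coe_nonneg.2 hm₂)]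
  · simpa [perspective] using hf.perspective_add_le_mul_fDerivInfty_add hm₁ hm₂ hl₂
  · simpa [perspective, add_comm] using hf.perspective_add_le_mul_fDerivInfty_add hm₂ hm₁ hl₁
  · simp only [perspective, (add_pos hl₁ hl₂).ne', hl₁.ne', hl₂.ne', if_false, ← EReal.coe_add,
      EReal.coe_le_coe_iff]
    exact hf.mul_div_add_le hm₁ hm₂ hl₁ hl₂

lemma ConvexOn.perspective_sum_le (hf : ConvexOn ℝ (Set.Ici 0) f) {ι : Type*} (s : Finset ι)
    {m l : ι → ℝ} (hm : ∀ i, 0 ≤ m i) (hl : ∀ i, 0 ≤ l i) :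
    perspective f (∑ i ∈ s, m i) (∑ i ∈ s, l i) ≤ ∑ i ∈ s, perspective f (m i) (l i) := by
  induction s using Finset.cons_induction with
  | empty => simp
  | cons i s hi ih =>
    rw [sum_cons, sum_cons, sum_cons]
    exact (hf.perspective_add_le (hm i) (sum_nonneg fun j _ => hm j) (hl i)
      (sum_nonneg fun j _ => hl j)).trans (add_le_add_right ih _)

lemma ConvexOn.sum_perspective_comp_le (hf : ConvexOn ℝ (Set.Ici 0) f) {Z Y : Type*}
    [Fintype Z] [Fintype Y] {a b : Z → ℝ} (ha : ∀ z, 0 ≤ a z) (hb : ∀ z, 0 ≤ b z)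
    {P : Z → Y → ℝ} (hP : ∀ z y, 0 ≤ P z y) (hP1 : ∀ z, ∑ y, P z y = 1) :
    ∑ y, perspective f (∑ z, a z * P z y) (∑ z, b z * P z y) ≤ ∑ z, perspective f (a z) (b z) :=
  calc ∑ y, perspective f (∑ z, a z * P z y) (∑ z, b z * P z y)
      ≤ ∑ y, ∑ z, perspective f (P z y * a z) (P z y * b z) :=
        sum_le_sum fun y _ => by
          simpa only [mul_comm] using hf.perspective_sum_le univ
            (fun z => mul_nonneg (ha z) (hP z y)) (fun z => mul_nonneg (hb z) (hP z y))
    _ = ∑ z, ∑ y, (P z y : EReal) * perspective f (a z) (b z) := by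
        rw [sum_comm]
        simp only [perspective_mul (hP _ _)]
    _ = ∑ z, perspective f (a z) (b z) := by
        simp only [EReal.sum_coe_mul _ (fun y _ => hP _ y), hP1, EReal.coe_one, one_mul]

lemma DfE_eq_sum_perspective {X : Type*} [Fintype X] (π : X → ℝ) (f : ℝ → ℝ)
    (M L : X → X → ℝ) :
    DfE π f M L = ∑ x, ∑ y, perspective f (π x * M x y) (π x * L x y) := by
  refine sum_congr rfl fun x _ => sum_congr rfl fun y _ => ?_
  by_cases hπ : π x = 0
  · by_cases hL : L x y = 0 <;> by_cases hM : M x y = 0 <;> simp [perspective, hπ, hL, hM]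
  · by_cases hL : L x y = 0
    · by_cases hM : M x y = 0 <;> simp [perspective, hL, hM]
    · simp [perspective, hπ, hL, mul_div_mul_left _ _ hπ, mul_assoc]

end Perspective

section TransitionMatrix

variable {X : Type*} [Fintype X]

lemma IsTransMat.matMul {M P : X → X → ℝ} (hM : IsTransMat M) (hP : IsTransMat P) :
    IsTransMat (matMul M P) := by
  refine ⟨fun x y => sum_nonneg fun z _ => mul_nonneg (hM.1 x z) (hP.1 z y), fun x => ?_⟩
  simp only [_root_.matMul]
  rw [sum_comm]
  simp only [← mul_sum, hP.2, mul_one, hM.2]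

lemma matMul_assoc (M P Q : X → X → ℝ) :
    matMul (matMul M P) Q = matMul M (matMul P Q) := by
  funext x y
  simp only [matMul, sum_mul, mul_sum]
  rw [sum_comm]
  simp only [mul_assoc]

variable {π : X → ℝ} {f : ℝ → ℝ}

lemma DfE_self (hf1 : f 1 = 0) (M : X → X → ℝ) : DfE π f M M = 0 := by
  simp [DfE_eq_sum_perspective, perspective_self hf1]

lemma DfE_matMul_le (hπ : ∀ x, 0 ≤ π x) (hf : ConvexOn ℝ (Set.Ici 0) f) {M L P : X → X → ℝ}
    (hM : ∀ x y, 0 ≤ M x y) (hL : ∀ x y, 0 ≤ L x y) (hP : IsTransMat P) :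
    DfE π f (matMul M P) (matMul L P) ≤ DfE π f M L := by
  simp only [DfE_eq_sum_perspective, matMul, mul_sum, ← mul_assoc]
  exact sum_le_sum fun x _ => hf.sum_perspective_comp_le (fun z => mul_nonneg (hπ x) (hM x z))
    (fun z => mul_nonneg (hπ x) (hL x z)) hP.1 hP.2

-- Data processing through the kernel that forgets the state.
lemma DfE_nonneg (hπ : ∀ x, 0 ≤ π x) (hf : ConvexOn ℝ (Set.Ici 0) f) (hf1 : f 1 = 0)
    {M L : X → X → ℝ} (hM : IsTransMat M) (hL : IsTransMat L) : 0 ≤ DfE π f M L := by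
  set U : X → X → ℝ := fun _ _ => (Fintype.card X : ℝ)⁻¹
  have hU : IsTransMat U := by
    refine ⟨fun _ _ => by positivity, fun x => ?_⟩
    have : Nonempty X := ⟨x⟩
    simp [U, Finset.card_univ]
  have hMU : matMul M U = matMul L U := by
    funext x y
    simp only [matMul, U, ← sum_mul, hM.2, hL.2]
  simpa [hMU, DfE_self hf1] using DfE_matMul_le hπ hf hM.1 hL.1 hU

end TransitionMatrix

lemma EReal.mul_toReal_inv_eq {a b : EReal} (ha : 0 < a) (ha' : a ≠ ⊤) (hb : 0 < b) (hb' : b ≠ ⊤)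
    (c : EReal) : c * (a.toReal⁻¹ : ℝ) = b * (a.toReal⁻¹ : ℝ) * (c * (b.toReal⁻¹ : ℝ)) := by
  lift a to ℝ using ⟨ha', ha.ne_bot⟩
  lift b to ℝ using ⟨hb', hb.ne_bot⟩
  have hbb : (b : EReal) * (b⁻¹ : ℝ) = 1 := by
    rw [← EReal.coe_mul, mul_inv_cancel₀ (by exact_mod_cast hb.ne'), EReal.coe_one]
  rw [EReal.toReal_coe, EReal.toReal_coe]
  calc c * (a⁻¹ : ℝ) = c * (a⁻¹ : ℝ) * (b * (b⁻¹ : ℝ)) := by rw [hbb, mul_one]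
    _ = _ := by ac_rfl

section Ergodicity

variable {X : Type*} [Fintype X] {π : X → ℝ} {f : ℝ → ℝ} {M L : X → X → ℝ}

lemma le_etaF (hM : IsTransMat M) (hL : IsTransMat L) (hML : M ≠ L) (hpos : 0 < DfE π f M L)
    (hfin : DfE π f M L ≠ ⊤) (P : X → X → ℝ) :
    DfE π f (matMul M P) (matMul L P) * (((DfE π f M L).toReal⁻¹ : ℝ) : EReal) ≤ etaF π f P :=
  le_sSup ⟨M, L, hM, hL, hML, hpos, hfin, rfl⟩

lemma etaF_nonneg (hπ : ∀ x, 0 ≤ π x) (hf : ConvexOn ℝ (Set.Ici 0) f) (hf1 : f 1 = 0)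
    (hM : IsTransMat M) (hL : IsTransMat L) (hML : M ≠ L) (hpos : 0 < DfE π f M L)
    (hfin : DfE π f M L ≠ ⊤) {P : X → X → ℝ} (hP : IsTransMat P) : 0 ≤ etaF π f P :=
  (mul_nonneg (DfE_nonneg hπ hf hf1 (hM.matMul hP) (hL.matMul hP))
    (EReal.coe_nonneg.2 (inv_nonneg.2 (EReal.toReal_nonneg hpos.le)))).trans
    (le_etaF hM hL hML hpos hfin P)

end Ergodicity

theorem stmt14_general {X : Type*} [Fintype X]
    (π : X → ℝ) (hπ : ∀ x, 0 < π x)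
    (f : ℝ → ℝ) (hf : ConvexOn ℝ (Set.Ici 0) f) (hf1 : f 1 = 0)
    (P Q : X → X → ℝ) (hP : IsTransMat P) (hQ : IsTransMat Q) :
    etaF π f (matMul P Q) ≤ etaF π f P * etaF π f Q := by
  have hπ0 : ∀ x, 0 ≤ π x := fun x => (hπ x).le
  refine sSup_le ?_
  rintro _ ⟨M, L, hM, hL, hML, hpos, hfin, rfl⟩
  have hMP := hM.matMul hP
  have hLP := hL.matMul hP
  have hD₁₀ := DfE_matMul_le hπ0 hf hM.1 hL.1 hP
  have hD₂₁ := DfE_matMul_le hπ0 hf hMP.1 hLP.1 hQ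
  have hD₂ := DfE_nonneg hπ0 hf hf1 (hMP.matMul hQ) (hLP.matMul hQ)
  have hηP := etaF_nonneg hπ0 hf hf1 hM hL hML hpos hfin hP
  have hηQ := etaF_nonneg hπ0 hf hf1 hM hL hML hpos hfin hQ
  rw [← matMul_assoc, ← matMul_assoc]
  rcases (DfE_nonneg hπ0 hf hf1 hMP hLP).eq_or_lt with hD₁ | hD₁
  · rw [le_antisymm (hD₂₁.trans hD₁.ge) hD₂, zero_mul]
    exact mul_nonneg hηP hηQ
  · have hD₁fin := ne_top_of_le_ne_top hfin hD₁₀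
    have hMLP : matMul M P ≠ matMul L P := fun h => by simp [h, DfE_self hf1] at hD₁
    rw [EReal.mul_toReal_inv_eq hpos hfin hD₁ hD₁fin]
    exact mul_le_mul (le_etaF hM hL hML hpos hfin P) (le_etaF hMP hLP hMLP hD₁ hD₁fin Q)
      (mul_nonneg hD₂ (EReal.coe_nonneg.2 (inv_nonneg.2 (EReal.toReal_nonneg hD₁.le)))) hηP

/-- Submultiplicativity of the f-divergence ergodicity coefficient. -/
theorem stmt14 {X : Type*} [Fintype X] [Nonempty X]
    (π : X → ℝ) (hπ : ∀ x, 0 < π x) (hπ1 : ∑ x, π x = 1)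
    (f : ℝ → ℝ) (hf : ConvexOn ℝ (Set.Ici 0) f) (hf1 : f 1 = 0)
    (P Q : X → X → ℝ) (hP : IsTransMat P) (hQ : IsTransMat Q) :
    etaF π f (matMul P Q) ≤ etaF π f P * etaF π f Q :=
  stmt14_general π hπ f hf hf1 P Q hP hQ
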